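/- arXiv:math-ph/0206037 — 7 statements merged into one kernel-verified Lean document; each statement's English description precedes it below -/
import Mathlib

section
/- For any density matrix ρ on a finite-dimensional Hilbert space and any orthonormal basis, the von Neumann entropy of ρ is at most the Shannon entropy of the diagonal of ρ in that basis: S_q(ρ) ≤ S(diag(ρ)). -/
open scoped ComplexOrder

noncomputable def eta (x : ℝ) : ℝ := -(x * Real.log x)

noncomputable def shannon {I : Type} [Fintype I] (p : I → ℝ) : ℝ := ∑ i, eta (p i)

noncomputable def vonNeumann {d : ℕ} {ρ : Matrix (Fin d) (Fin d) ℂ}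
    (h : ρ.IsHermitian) : ℝ := ∑ i, eta (h.eigenvalues i)

/-!
Diagonalize `ρ = U diag(λ) Uᴴ`. Then `ρᵢᵢ = ∑ⱼ |Uᵢⱼ|² λⱼ`, and unitarity makes `(|Uᵢⱼ|²)`
doubly stochastic. Jensen's inequality for the concave `η x = -x log x` along each row, summed
over the rows and regrouped by the column sums, gives `∑ⱼ η(λⱼ) ≤ ∑ᵢ η(ρᵢᵢ)`.
-/

open Matrix

theorem ConcaveOn.sum_le_sum_mulVec_of_mem_doublyStochastic {𝕜 β n : Type*}
    [Field 𝕜] [LinearOrder 𝕜] [IsStrictOrderedRing 𝕜]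
    [AddCommGroup β] [PartialOrder β] [IsOrderedAddMonoid β] [Module 𝕜 β]
    [IsStrictOrderedModule 𝕜 β]
    [Fintype n] [DecidableEq n] {f : 𝕜 → β} {s : Set 𝕜} (hf : ConcaveOn 𝕜 s f)
    {M : Matrix n n 𝕜} (hM : M ∈ doublyStochastic 𝕜 n) {x : n → 𝕜} (hx : ∀ j, x j ∈ s) :
    ∑ j, f (x j) ≤ ∑ i, f ((M *ᵥ x) i) :=
  calc ∑ j, f (x j) = ∑ i, ∑ j, M i j • f (x j) := by
        simp only [Finset.sum_comm (γ := n), ← Finset.sum_smul,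
          sum_col_of_mem_doublyStochastic hM, one_smul]
    _ ≤ ∑ i, f ((M *ᵥ x) i) := Finset.sum_le_sum fun i _ =>
        hf.le_map_sum (fun j _ => nonneg_of_mem_doublyStochastic hM)
          (sum_row_of_mem_doublyStochastic hM i) (fun j _ => hx j)

theorem Matrix.sq_norm_apply_mem_doublyStochastic_of_mem_unitaryGroup {𝕜 n : Type*} [RCLike 𝕜]
    [Fintype n] [DecidableEq n] {U : Matrix n n 𝕜} (hU : U ∈ unitaryGroup n 𝕜) :
    (of fun i j => ‖U i j‖ ^ 2) ∈ doublyStochastic ℝ n := by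
  have hrow (i : n) : ∑ j, ‖U i j‖ ^ 2 = 1 := by
    have := congr_arg (fun M => M i i) (mem_unitaryGroup_iff.mp hU)
    simp only [mul_apply, star_apply, RCLike.star_def, RCLike.mul_conj, one_apply_eq] at this
    exact_mod_cast this
  have hcol (j : n) : ∑ i, ‖U i j‖ ^ 2 = 1 := by
    have := congr_arg (fun M => M j j) (mem_unitaryGroup_iff'.mp hU)
    simp only [mul_apply, star_apply, RCLike.star_def, RCLike.conj_mul, one_apply_eq] at this
    exact_mod_cast this
  exact mem_doublyStochastic_iff_sum.mpr ⟨fun i j => sq_nonneg _, hrow, hcol⟩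

theorem Matrix.IsHermitian.re_apply_self_eq_mulVec_eigenvalues {𝕜 n : Type*} [RCLike 𝕜]
    [Fintype n] [DecidableEq n] {A : Matrix n n 𝕜} (hA : A.IsHermitian) (i : n) :
    RCLike.re (A i i) = ((of fun i j => ‖hA.eigenvectorUnitary i j‖ ^ 2) *ᵥ hA.eigenvalues) i := by
  conv_lhs => rw [hA.spectral_theorem]
  simp only [Unitary.conjStarAlgAut_apply, mul_apply, diagonal_apply, star_apply,
    Function.comp_apply, mul_ite, mul_zero, Finset.sum_ite_eq', Finset.mem_univ, if_true]
  simp only [mulVec, dotProduct, of_apply, map_sum, RCLike.star_def,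
    mul_right_comm _ (RCLike.ofReal _), RCLike.mul_conj]
  norm_cast

theorem stmt5_general {d : ℕ} (ρ : Matrix (Fin d) (Fin d) ℂ)
    (hρ : ρ.PosSemidef) :
    vonNeumann hρ.1 ≤ shannon (fun i => (ρ i i).re) := by
  have heta : eta = Real.negMulLog := funext fun x => by simp [eta, Real.negMulLog, neg_mul]
  have hdiag (i : Fin d) : (ρ i i).re = _ := hρ.1.re_apply_self_eq_mulVec_eigenvalues i
  simp only [vonNeumann, shannon, heta, hdiag]
  exact Real.concaveOn_negMulLog.sum_le_sum_mulVec_of_mem_doublyStochastic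
    (sq_norm_apply_mem_doublyStochastic_of_mem_unitaryGroup hρ.1.eigenvectorUnitary.2)
    hρ.eigenvalues_nonneg

/-- for a density matrix, the von Neumann entropy is at most the
Shannon entropy of the diagonal in any fixed basis. -/
theorem stmt5 {d : ℕ} (ρ : Matrix (Fin d) (Fin d) ℂ)
    (hρ : ρ.PosSemidef) (htr : ρ.trace = 1) :
    vonNeumann hρ.1 ≤ shannon (fun i => (ρ i i).re) :=
  stmt5_general ρ hρ
end

section
/- Let M be a stochastic matrix viewed as a positive unital map between function spaces on finite sets I and J, with dual map M* on probability measures given by (M*μ)_j = Σ_i μ_i M_{ij}. Then for any two probability measures μ, ν on I, the relative entropy satisfies S(M*μ | M*ν) ≤ S(μ | ν). -/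
/-!
For each `j`, the log-sum inequality applied to the weights `μ i * M i j` and `ν i * M i j`
bounds the `j`-th term of `S(M*μ | M*ν)`; summing over `j`, the factors `M i j` recombine to
`Σ_j M i j = 1` and leave `S(μ | ν)`.
-/

/-- Relative entropy `S(μ|ν) = Σ_i μ_i log(μ_i/ν_i)` of probability vectors,
with value `+∞` when μ is not absolutely continuous with respect to ν. -/
noncomputable def relEnt {I : Type} [Fintype I] (μ ν : I → ℝ) : EReal :=
  if ∀ i, ν i = 0 → μ i = 0 then
    ((∑ i, μ i * Real.log (μ i / ν i) : ℝ) : EReal)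
  else ⊤

open Finset Real

lemma sub_le_mul_log_div {a c : ℝ} (ha : 0 ≤ a) (hc : 0 ≤ c) (hac : c = 0 → a = 0) :
    a - c ≤ a * log (a / c) := by
  rcases ha.eq_or_lt with rfl | ha
  · simpa using hc
  have hc : 0 < c := hc.lt_of_ne' fun h => ha.ne' (hac h)
  have := one_sub_inv_le_log_of_pos (div_pos ha hc)
  calc a - c = a * (1 - (a / c)⁻¹) := by field_simp
    _ ≤ a * log (a / c) := by gcongr

lemma mul_log_div_sub_mul_log {a b r : ℝ} (hr : r ≠ 0) (hab : b = 0 → a = 0) :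
    a * log (a / b) - a * log r = a * log (a / (r * b)) := by
  rcases eq_or_ne a 0 with rfl | ha
  · simp
  have hb : b ≠ 0 := fun h => ha (hab h)
  rw [← mul_sub, ← log_div (div_ne_zero ha hb) hr, div_div, mul_comm b]

/-- The log-sum inequality. -/
theorem sum_mul_log_sum_div_sum_le {ι : Type*} (s : Finset ι) {a b : ι → ℝ}
    (ha : ∀ i ∈ s, 0 ≤ a i) (hb : ∀ i ∈ s, 0 ≤ b i)
    (hab : ∀ i ∈ s, b i = 0 → a i = 0) :
    (∑ i ∈ s, a i) * log ((∑ i ∈ s, a i) / ∑ i ∈ s, b i) ≤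
      ∑ i ∈ s, a i * log (a i / b i) := by
  rcases (sum_nonneg ha).eq_or_lt with hA | hA
  · rw [← hA, zero_mul]
    exact sum_nonneg fun i hi => by simp [(sum_eq_zero_iff_of_nonneg ha).1 hA.symm i hi]
  rcases (sum_nonneg hb).eq_or_lt with hB | hB
  · rw [← hB, div_zero, log_zero, mul_zero]
    exact sum_nonneg fun i hi => by simp [hab i hi ((sum_eq_zero_iff_of_nonneg hb).1 hB.symm i hi)]
  set A := ∑ i ∈ s, a i
  set B := ∑ i ∈ s, b i
  have hr : A / B ≠ 0 := (div_pos hA hB).ne'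
  -- Gibbs' inequality `a - c ≤ a log (a / c)` for `a` against `b` rescaled to the mass `A`.
  have hgibbs : ∀ i ∈ s, a i - A / B * b i ≤ a i * log (a i / b i) - a i * log (A / B) :=
    fun i hi => by
      rw [mul_log_div_sub_mul_log hr (hab i hi)]
      exact sub_le_mul_log_div (ha i hi) (mul_nonneg (div_pos hA hB).le (hb i hi))
        fun h => hab i hi ((mul_eq_zero.1 h).resolve_left hr)
  have hsum := sum_le_sum hgibbs
  rw [sum_sub_distrib, sum_sub_distrib, ← mul_sum, ← sum_mul, div_mul_cancel₀ _ hB.ne',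
    sub_self] at hsum
  linarith

lemma mul_mul_log_mul_div_mul (a b c : ℝ) :
    a * c * log (a * c / (b * c)) = a * log (a / b) * c := by
  rcases eq_or_ne c 0 with rfl | hc
  · simp
  · rw [mul_div_mul_right _ _ hc]; ring

lemma sum_mul_eq_zero_of_sum_mul_eq_zero {I J : Type*} [Fintype I] {M : I → J → ℝ}
    (hM0 : ∀ i j, 0 ≤ M i j) {μ ν : I → ℝ}
    (hν0 : ∀ i, 0 ≤ ν i) (hμν : ∀ i, ν i = 0 → μ i = 0) (j : J) :
    ∑ i, ν i * M i j = 0 → ∑ i, μ i * M i j = 0 := by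
  intro h
  refine sum_eq_zero fun i hi => ?_
  have hterm := (sum_eq_zero_iff_of_nonneg fun i _ => mul_nonneg (hν0 i) (hM0 i j)).1 h i hi
  rcases mul_eq_zero.1 hterm with h | h <;> simp [h, hμν]

lemma sum_mul_log_div_sum_mul_le {I J : Type*} [Fintype I] [Fintype J] {M : I → J → ℝ}
    (hM0 : ∀ i j, 0 ≤ M i j) (hM1 : ∀ i, ∑ j, M i j = 1) {μ ν : I → ℝ}
    (hμ0 : ∀ i, 0 ≤ μ i) (hν0 : ∀ i, 0 ≤ ν i) (hμν : ∀ i, ν i = 0 → μ i = 0) :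
    ∑ j, (∑ i, μ i * M i j) * log ((∑ i, μ i * M i j) / ∑ i, ν i * M i j) ≤
      ∑ i, μ i * log (μ i / ν i) :=
  calc ∑ j, (∑ i, μ i * M i j) * log ((∑ i, μ i * M i j) / ∑ i, ν i * M i j)
      ≤ ∑ j, ∑ i, μ i * M i j * log (μ i * M i j / (ν i * M i j)) :=
        sum_le_sum fun j _ => sum_mul_log_sum_div_sum_le _
          (fun i _ => mul_nonneg (hμ0 i) (hM0 i j)) (fun i _ => mul_nonneg (hν0 i) (hM0 i j))
          fun i _ h => by
            rcases mul_eq_zero.1 h with h | h <;> simp [h, hμν]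
    _ = ∑ i, μ i * log (μ i / ν i) := by
        simp only [mul_mul_log_mul_div_mul]
        rw [sum_comm]
        simp only [← mul_sum, hM1, mul_one]

theorem stmt6_general {I J : Type} [Fintype I] [Fintype J]
    (M : I → J → ℝ) (hM0 : ∀ i j, 0 ≤ M i j) (hM1 : ∀ i, ∑ j, M i j = 1)
    (μ ν : I → ℝ)
    (hμ0 : ∀ i, 0 ≤ μ i)
    (hν0 : ∀ i, 0 ≤ ν i) :
    relEnt (fun j => ∑ i, μ i * M i j) (fun j => ∑ i, ν i * M i j) ≤
      relEnt μ ν := by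
  unfold relEnt
  by_cases hμν : ∀ i, ν i = 0 → μ i = 0
  · rw [if_pos hμν, if_pos (sum_mul_eq_zero_of_sum_mul_eq_zero hM0 hν0 hμν),
      EReal.coe_le_coe_iff]
    exact sum_mul_log_div_sum_mul_le hM0 hM1 hμ0 hν0 hμν
  · rw [if_neg hμν]
    exact le_top

/-- monotonicity of relative entropy under the dual of a
stochastic (positive unital) map `M`: `S(M*μ | M*ν) ≤ S(μ | ν)`. -/
theorem stmt6 {I J : Type} [Fintype I] [Fintype J]
    (M : I → J → ℝ) (hM0 : ∀ i j, 0 ≤ M i j) (hM1 : ∀ i, ∑ j, M i j = 1)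
    (μ ν : I → ℝ)
    (hμ0 : ∀ i, 0 ≤ μ i) (hμ1 : ∑ i, μ i = 1)
    (hν0 : ∀ i, 0 ≤ ν i) (hν1 : ∑ i, ν i = 1) :
    relEnt (fun j => ∑ i, μ i * M i j) (fun j => ∑ i, ν i * M i j) ≤
      relEnt μ ν :=
  stmt6_general M hM0 hM1 μ ν hμ0 hν0
end

section
/- Every probability measure ν on I × A whose marginal over A equals μ can be written as a convex combination ν = Σ_f c_f ν_f over functions f : I → A, where ν_f(i,α) = μ_i δ_{α,f(i)}, c_f ≥ 0, and Σ_f c_f = 1. -/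
/-- every probability measure on I × A with I-marginal μ is a
convex combination of the measures `ν_f(i,α) = μ_i δ_{α,f(i)}`, f : I → A. -/
theorem stmt10 {I A : Type} [Fintype I] [DecidableEq I] [Fintype A] [DecidableEq A]
    (μ : I → ℝ) (hμ0 : ∀ i, 0 ≤ μ i) (hμ1 : ∑ i, μ i = 1)
    (ν : I × A → ℝ) (hν0 : ∀ p, 0 ≤ ν p) (hνm : ∀ i, ∑ a, ν (i, a) = μ i) :
    ∃ c : (I → A) → ℝ, (∀ f, 0 ≤ c f) ∧ (∑ f : I → A, c f = 1) ∧
      ∀ p : I × A,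
        ν p = ∑ f : I → A, c f * (if p.2 = f p.1 then μ p.1 else 0) := by
  -- A is nonempty
  have hA : Nonempty A := by
    by_contra h
    have hE : IsEmpty A := not_nonempty_iff.1 h
    have : ∀ i, μ i = 0 := by
      intro i
      rw [← hνm i, Finset.univ_eq_empty, Finset.sum_empty]
    simp [this] at hμ1
  have hcardA : (0 : ℝ) < (Fintype.card A : ℝ) := by
    exact_mod_cast Fintype.card_pos
  set q : I → A → ℝ := fun i a =>
    if μ i = 0 then (Fintype.card A : ℝ)⁻¹ else ν (i, a) / μ i with hq
  have hq0 : ∀ i a, 0 ≤ q i a := by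
    intro i a
    by_cases h : μ i = 0
    · simp only [hq, h, if_true]
      positivity
    · simp only [hq, h, if_false]
      exact div_nonneg (hν0 _) (hμ0 i)
  have hqsum : ∀ i, ∑ a, q i a = 1 := by
    intro i
    by_cases h : μ i = 0
    · simp [hq, h, Finset.sum_const, Finset.card_univ]
    · simp only [hq, h, if_false]
      rw [← Finset.sum_div, hνm i, div_self h]
  refine ⟨fun f => ∏ i, q i (f i), fun f => Finset.prod_nonneg fun i _ => hq0 i (f i), ?_, ?_⟩
  · have := Finset.prod_univ_sum (fun _ : I => (Finset.univ : Finset A)) (fun i a => q i a)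
    rw [Fintype.piFinset_univ] at this
    rw [← this]
    simp [hqsum]
  · rintro ⟨i0, a⟩
    simp only
    -- rewrite each term as μ i0 * ∏ r i (f i)
    set r : I → A → ℝ := fun i b =>
      (if i = i0 then (if a = b then 1 else 0) else 1) * q i b with hr
    have key : ∀ f : I → A,
        (∏ i, q i (f i)) * (if a = f i0 then μ i0 else 0)
          = μ i0 * ∏ i, r i (f i) := by
      intro f
      have : ∏ i, r i (f i)
          = (∏ i, (if i = i0 then (if a = f i then 1 else 0) else 1)) * ∏ i, q i (f i) := by
        rw [← Finset.prod_mul_distrib]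
      rw [this]
      have h2 : (∏ i, (if i = i0 then (if a = f i then 1 else 0) else 1))
          = (if a = f i0 then (1:ℝ) else 0) := by
        rw [Finset.prod_eq_single i0]
        · simp
        · intro b _ hb; simp [hb]
        · intro h; exact absurd (Finset.mem_univ i0) h
      rw [h2]
      by_cases h : a = f i0 <;> simp [h] <;> ring
    rw [Finset.sum_congr rfl fun f _ => key f, ← Finset.mul_sum]
    have hsum : ∑ f : I → A, ∏ i, r i (f i) = q i0 a := by
      have := Finset.prod_univ_sum (fun _ : I => (Finset.univ : Finset A)) (fun i b => r i b)
      rw [Fintype.piFinset_univ] at this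
      rw [← this]
      have hrs : ∀ i, ∑ b, r i b = (if i = i0 then q i0 a else 1) := by
        intro i
        by_cases h : i = i0
        · subst h
          simp [hr, Finset.sum_ite_eq, hqsum]
        · simp [hr, h, hqsum]
      rw [Finset.prod_congr rfl fun i _ => hrs i]
      rw [Finset.prod_eq_single i0]
      · simp
      · intro b _ hb; simp [hb]
      · intro h; exact absurd (Finset.mem_univ i0) h
    rw [hsum]
    by_cases h : μ i0 = 0
    · have : ν (i0, a) = 0 := by
        have hsum0 : ∑ b, ν (i0, b) = 0 := by rw [hνm, h]
        have := (Finset.sum_eq_zero_iff_of_nonneg (fun b _ => hν0 (i0, b))).1 hsum0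
        exact this a (Finset.mem_univ a)
      rw [this, h, zero_mul]
    · simp only [hq, h, if_false]
      field_simp
end

section
/- For any probability measure μ on a finite set X and any partition of unity F on X, the quantity H_Hud[μ,F] = Σ_{k,x} μ_x f_k(x) log(f_k(x)/μ(f_k)) is bounded above by the Shannon entropy S(μ) of μ. -/
/-- `H_Hud[μ,F] = Σ_{k,x} μ_x f_k(x) log(f_k(x)/μ(f_k)) ≤ S(μ)`. -/
theorem stmt13 {X K : Type} [Fintype X] [Fintype K]
    (μ : X → ℝ) (hμ0 : ∀ x, 0 ≤ μ x) (hμ1 : ∑ x, μ x = 1)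
    (F : K → X → ℝ) (hF0 : ∀ k x, 0 ≤ F k x) (hF1 : ∀ x, ∑ k, F k x = 1) :
    (∑ k, ∑ x, μ x * F k x * Real.log (F k x / (∑ y, μ y * F k y))) ≤
      shannon μ := by
  have key : ∀ k x, μ x * F k x * Real.log (F k x / (∑ y, μ y * F k y)) ≤
      -(μ x * F k x * Real.log (μ x)) := by
    intro k x
    set S := ∑ y, μ y * F k y with hS
    have hSa : μ x * F k x ≤ S :=
      Finset.single_le_sum (f := fun y => μ y * F k y)
        (fun y _ => mul_nonneg (hμ0 y) (hF0 k y)) (Finset.mem_univ x)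
    rcases eq_or_lt_of_le (mul_nonneg (hμ0 x) (hF0 k x)) with h | h
    · rw [← h]; simp
    · rcases mul_pos_iff.mp h with ⟨hμx, hFx⟩ | ⟨h1, _⟩
      · have hS0 : 0 < S := lt_of_lt_of_le h hSa
        have heq : Real.log (F k x / S) + Real.log (μ x) =
            Real.log (μ x * F k x / S) := by
          rw [Real.log_div (ne_of_gt hFx) (ne_of_gt hS0),
            Real.log_div (ne_of_gt h) (ne_of_gt hS0),
            Real.log_mul (ne_of_gt hμx) (ne_of_gt hFx)]
          ring
        have hle : μ x * F k x / S ≤ 1 := (div_le_one hS0).mpr hSa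
        have hlog : Real.log (μ x * F k x / S) ≤ 0 := Real.log_nonpos (by positivity) hle
        nlinarith [mul_nonneg (le_of_lt h) (neg_nonneg.mpr hlog)]
      · exact absurd h1 (not_lt.mpr (hμ0 x))
  calc (∑ k, ∑ x, μ x * F k x * Real.log (F k x / (∑ y, μ y * F k y)))
      ≤ ∑ k, ∑ x, -(μ x * F k x * Real.log (μ x)) :=
        Finset.sum_le_sum fun k _ => Finset.sum_le_sum fun x _ => key k x
    _ = ∑ x, ∑ k, -(μ x * F k x * Real.log (μ x)) := Finset.sum_comm
    _ = shannon μ := by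
        unfold shannon eta
        refine Finset.sum_congr rfl fun x _ => ?_
        have : ∀ k, -(μ x * F k x * Real.log (μ x)) =
            F k x * (-(μ x * Real.log (μ x))) := fun k => by ring
        simp_rw [this, ← Finset.sum_mul, hF1 x, one_mul]
end

section
/- If F = {f_k} is a partition of unity on a finite set X consisting of simple functions over a partition C = {C_i} of X, i.e., f_k = Σ_i f_{ik} χ_{C_i} with [f_{ik}] a stochastic matrix, then μ∘F = M*(μ∘χ_C) where M is the positive unital map with matrix [f_{ik}], and consequently H_Hud[μ,F] ≤ H_Hud[μ,χ_C]. -/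
/-- `H_Hud[μ,F] = S(μ∘F) − Σ_x μ_x S(δ_x∘F)`. -/
noncomputable def HHud {X K : Type} [Fintype X] [Fintype K]
    (μ : X → ℝ) (F : K → X → ℝ) : ℝ :=
  shannon (fun k => ∑ x, μ x * F k x) - ∑ x, μ x * shannon (fun k => F k x)

lemma eta_zero : eta 0 = 0 := by simp [eta]
lemma eta_one : eta 1 = 0 := by simp [eta]

lemma eta_add_le (a b : ℝ) (ha : 0 ≤ a) (hb : 0 ≤ b) : eta (a + b) ≤ eta a + eta b := by
  have h1 : a * Real.log a ≤ a * Real.log (a + b) := by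
    rcases eq_or_lt_of_le ha with h | h
    · simp [← h]
    · exact mul_le_mul_of_nonneg_left (Real.log_le_log h (by linarith)) ha
  have h2 : b * Real.log b ≤ b * Real.log (a + b) := by
    rcases eq_or_lt_of_le hb with h | h
    · simp [← h]
    · exact mul_le_mul_of_nonneg_left (Real.log_le_log h (by linarith)) hb
  simp only [eta]
  nlinarith [h1, h2]

lemma eta_sum_le {I : Type} [Fintype I] (x : I → ℝ) (hx : ∀ i, 0 ≤ x i) :
    eta (∑ i, x i) ≤ ∑ i, eta (x i) := by
  classical
  have H : ∀ s : Finset I, eta (∑ i ∈ s, x i) ≤ ∑ i ∈ s, eta (x i) := by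
    intro s
    induction s using Finset.induction with
    | empty => simp [eta_zero]
    | @insert a s hmem ih =>
      rw [Finset.sum_insert hmem, Finset.sum_insert hmem]
      calc eta (x a + ∑ i ∈ s, x i) ≤ eta (x a) + eta (∑ i ∈ s, x i) :=
            eta_add_le _ _ (hx a) (Finset.sum_nonneg fun i _ => hx i)
        _ ≤ eta (x a) + ∑ i ∈ s, eta (x i) := by linarith
  exact H Finset.univ

lemma eta_mul (a b : ℝ) : eta (a * b) = b * eta a + a * eta b := by
  rcases eq_or_ne a 0 with rfl | ha
  · simp [eta]
  rcases eq_or_ne b 0 with rfl | hb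
  · simp [eta]
  simp only [eta, Real.log_mul ha hb]
  ring

/-- if the partition of unity F consists of simple functions over
a partition C of X (encoded by the cell map `c : X → I`, surjective), i.e.
`f_k(x) = M_{c(x),k}` with M stochastic, then `μ∘F = M*(μ∘χ_C)` and
`H_Hud[μ,F] ≤ H_Hud[μ,χ_C]`. -/
theorem stmt14 {X I K : Type} [Fintype X] [Fintype I] [DecidableEq I] [Fintype K]
    (μ : X → ℝ) (hμ0 : ∀ x, 0 ≤ μ x) (hμ1 : ∑ x, μ x = 1)
    (c : X → I) (hc : Function.Surjective c)
    (M : I → K → ℝ) (hM0 : ∀ i k, 0 ≤ M i k) (hM1 : ∀ i, ∑ k, M i k = 1)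
    (F : K → X → ℝ) (hF : ∀ k x, F k x = M (c x) k) :
    (∀ k, (∑ x, μ x * F k x) =
      ∑ i, (∑ x, μ x * (if c x = i then (1:ℝ) else 0)) * M i k) ∧
    HHud μ F ≤ HHud μ (fun i x => if c x = i then (1:ℝ) else 0) := by
  classical
  set ν : I → ℝ := fun i => ∑ x, μ x * (if c x = i then (1:ℝ) else 0) with hν
  have hν0 : ∀ i, 0 ≤ ν i := fun i =>
    Finset.sum_nonneg fun x _ => mul_nonneg (hμ0 x) (by positivity)
  have part1 : ∀ k, (∑ x, μ x * F k x) = ∑ i, ν i * M i k := by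
    intro k
    have h1 : ∀ x, ∑ i, (μ x * (if c x = i then (1:ℝ) else 0)) * M i k = μ x * F k x := by
      intro x
      rw [hF]
      simp [ite_mul, mul_ite]
    calc ∑ x, μ x * F k x = ∑ x, ∑ i, (μ x * (if c x = i then (1:ℝ) else 0)) * M i k := by
          simp only [h1]
      _ = ∑ i, ∑ x, (μ x * (if c x = i then (1:ℝ) else 0)) * M i k := Finset.sum_comm
      _ = ∑ i, ν i * M i k := by simp [hν, Finset.sum_mul]
  refine ⟨part1, ?_⟩
  have hSdelta : ∀ x, shannon (fun i => if c x = i then (1:ℝ) else 0) = 0 := by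
    intro x
    apply Finset.sum_eq_zero
    intro i _
    by_cases h : c x = i <;> simp [h, eta_zero, eta_one]
  have hmix : ∑ x, μ x * shannon (fun k => F k x) = ∑ i, ν i * shannon (fun k => M i k) := by
    have h1 : ∀ x, ∑ i, (μ x * (if c x = i then (1:ℝ) else 0)) * shannon (fun k => M i k)
        = μ x * shannon (fun k => F k x) := by
      intro x
      have : (fun k => F k x) = fun k => M (c x) k := by funext k; exact hF k x
      rw [this]
      simp [ite_mul, mul_ite]
    calc ∑ x, μ x * shannon (fun k => F k x)
        = ∑ x, ∑ i, (μ x * (if c x = i then (1:ℝ) else 0)) * shannon (fun k => M i k) := by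
          simp only [h1]
      _ = ∑ i, ∑ x, (μ x * (if c x = i then (1:ℝ) else 0)) * shannon (fun k => M i k) :=
          Finset.sum_comm
      _ = ∑ i, ν i * shannon (fun k => M i k) := by simp [hν, Finset.sum_mul]
  have key : shannon (fun k => ∑ i, ν i * M i k)
      ≤ shannon ν + ∑ i, ν i * shannon (fun k => M i k) := by
    unfold shannon
    calc ∑ k, eta (∑ i, ν i * M i k)
        ≤ ∑ k, ∑ i, eta (ν i * M i k) := by
          apply Finset.sum_le_sum
          intro k _
          exact eta_sum_le _ (fun i => mul_nonneg (hν0 i) (hM0 i k))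
      _ = ∑ k, ∑ i, (M i k * eta (ν i) + ν i * eta (M i k)) := by
          simp only [eta_mul]
      _ = ∑ i, ∑ k, (M i k * eta (ν i) + ν i * eta (M i k)) := Finset.sum_comm
      _ = ∑ i, ((∑ k, M i k) * eta (ν i) + ν i * ∑ k, eta (M i k)) := by
          simp [Finset.sum_add_distrib, Finset.sum_mul, Finset.mul_sum]
      _ = ∑ i, (eta (ν i) + ν i * ∑ k, eta (M i k)) := by
          simp only [hM1, one_mul]
      _ = (∑ i, eta (ν i)) + ∑ i, ν i * ∑ k, eta (M i k) := Finset.sum_add_distrib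
  have hFk : (fun k => ∑ x, μ x * F k x) = fun k => ∑ i, ν i * M i k := by
    funext k; exact part1 k
  unfold HHud
  rw [hFk]
  simp only [hSdelta, mul_zero, Finset.sum_const_zero, sub_zero, hmix]
  have : shannon (fun i => ∑ x, μ x * (if c x = i then (1:ℝ) else 0)) = shannon ν := rfl
  rw [this]
  linarith [key]
end

section
/- For any probability measure μ on a finite set X and any partition of unity F, one has H_Hud[μ,F] ≤ S_q(ρ_Mak[μ,F]), where H_Hud[μ,F] = S(μ∘F) − Σ_x μ_x S(δ_x∘F) and (ρ_Mak[μ,F])_{kl} = Σ_x μ_x √(f_k(x)f_l(x)). -/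
/-- Von Neumann entropy of a real symmetric matrix via its eigenvalues. -/
noncomputable def vonNeumannR {K : Type} [Fintype K] [DecidableEq K]
    {ρ : Matrix K K ℝ} (h : ρ.IsHermitian) : ℝ := ∑ k, eta (h.eigenvalues k)

/-!
Write `ρ = Bᴴ B` with rows `B x = √μ_x ψ_x`. For positive weights `g`, Cauchy–Schwarz gives the
Loewner bound `ρ ≤ diag ((∑ g) ρ_kk / g_k)`, and since `log` is operator monotone,
`log (ρ + δ) ≤ diag (log ((∑ g) ρ_kk / g_k + δ))`; the shift by `δ > 0` keeps both sides
positive definite. Testing this against `B x` with `g = F(·, x) + δ` and summing over `x` gives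
`-S_q(ρ) ≤ Tr (ρ log (ρ + δ)) ≤ ∑ₓ μₓ ∑ₖ fₖ(x) log ((1 + |K| δ) (μ∘F)ₖ / (fₖ(x) + δ) + δ)`,
and the right side tends to `-H_Hud[μ, F]` as `δ → 0⁺`.
-/

open Matrix Finset Filter Topology Real
open scoped MatrixOrder

namespace Matrix

theorem trace_conjTranspose_mul_self_mul {m n R : Type*} [Fintype m] [Fintype n]
    [CommSemiring R] [StarRing R] (B : Matrix m n R) (M : Matrix n n R) :
    (Bᴴ * B * M).trace = ∑ i, B i ⬝ᵥ M *ᵥ star (B i) := by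
  rw [Matrix.mul_assoc, trace_mul_comm, trace]
  refine sum_congr rfl fun i _ => ?_
  simp only [diag_apply, mul_apply, dotProduct, mulVec, conjTranspose_apply, Pi.star_apply, mul_sum,
    sum_mul]
  rw [sum_comm]
  exact sum_congr rfl fun _ _ => sum_congr rfl fun _ _ => mul_assoc _ _ _

variable {m n : Type*} [Fintype m] [Fintype n] [DecidableEq n]

theorem cfc_diagonal (f : ℝ → ℝ) (d : n → ℝ) :
    cfc f (diagonal d) = diagonal (f ∘ d) := by
  -- `cfc f` only sees `f` on the finite spectrum, where it agrees with an interpolating polynomial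
  set p : Polynomial ℝ := Lagrange.interpolate (univ.image d) id f
  have hp (i : n) : p.eval (d i) = f (d i) :=
    Lagrange.eval_interpolate_at_node f (Set.injOn_id _) (mem_image_of_mem d (mem_univ i))
  rw [cfc_congr (g := fun x => p.eval x) ?_,
    cfc_polynomial p _ (isHermitian_diagonal d).isSelfAdjoint]
  · have hmap : Polynomial.aeval (diagonal d) p = diagonal (Polynomial.aeval d p) := by
      simpa using Polynomial.aeval_algHom_apply (diagonalAlgHom ℝ) d p
    rw [hmap, Polynomial.aeval_pi_apply]
    ext i j
    simp [diagonal_apply, hp]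
  · rw [spectrum_diagonal]
    rintro _ ⟨i, rfl⟩
    exact (hp i).symm

theorem IsHermitian.trace_cfc {A : Matrix n n ℝ} (hA : A.IsHermitian) (f : ℝ → ℝ) :
    (cfc f A).trace = ∑ i, f (hA.eigenvalues i) := by
  rw [hA.cfc_eq, IsHermitian.cfc, Unitary.conjStarAlgAut_apply, trace_mul_cycle,
    Unitary.coe_star_mul_self, one_mul, trace_diagonal]
  rfl

theorem IsHermitian.trace_mul_cfc {A : Matrix n n ℝ} (hA : A.IsHermitian) (f : ℝ → ℝ) :
    (A * cfc f A).trace = ∑ i, hA.eigenvalues i * f (hA.eigenvalues i) := by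
  have hs := A.finite_spectrum (R := ℝ)
  rw [← hA.trace_cfc fun t => t * f t, cfc_mul (fun t => t) f A (hs.continuousOn _)
    (hs.continuousOn _), cfc_id' ℝ A hA.isSelfAdjoint]

section Complexification

open scoped Matrix.Norms.L2Operator ComplexOrder

noncomputable def ofRealStarAlgHom : Matrix n n ℝ →⋆ₐ[ℝ] Matrix n n ℂ :=
  { (Algebra.ofId ℝ ℂ).mapMatrix with
    map_star' := fun A => by ext; simp [Algebra.ofId_apply] }

@[simp] lemma ofRealStarAlgHom_apply (A : Matrix n n ℝ) :
    ofRealStarAlgHom A = A.map (↑) := rfl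

lemma continuous_ofRealStarAlgHom : Continuous (ofRealStarAlgHom : Matrix n n ℝ → _) :=
  continuous_id.matrix_map Complex.continuous_ofReal

lemma ofRealStarAlgHom_cfc (f : ℝ → ℝ) {A : Matrix n n ℝ} (hA : A.IsHermitian) :
    ofRealStarAlgHom (cfc f A) = cfc f (ofRealStarAlgHom A) :=
  StarAlgHom.map_cfc ofRealStarAlgHom f A (A.finite_spectrum.continuousOn _)
    continuous_ofRealStarAlgHom hA (hA.isSelfAdjoint.map _)

lemma ofRealStarAlgHom_le_iff {A B : Matrix n n ℝ} :
    ofRealStarAlgHom A ≤ ofRealStarAlgHom B ↔ A ≤ B := by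
  refine ⟨fun h => ?_, fun h => OrderHomClass.mono ofRealStarAlgHom h⟩
  rw [le_iff, ← map_sub] at h
  rw [le_iff, posSemidef_iff_dotProduct_mulVec]
  refine ⟨?_, fun x => ?_⟩
  · ext i j
    have := congr_fun₂ h.isHermitian i j
    simp only [ofRealStarAlgHom_apply, conjTranspose_apply, map_apply, RCLike.star_def,
      Complex.conj_ofReal] at this
    exact_mod_cast this
  · have := h.dotProduct_mulVec_nonneg (fun i => (x i : ℂ))
    have hreal : star (fun i => (x i : ℂ)) ⬝ᵥ ofRealStarAlgHom (B - A) *ᵥ (fun i => (x i : ℂ))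
        = ((star x ⬝ᵥ (B - A) *ᵥ x : ℝ) : ℂ) := by
      simp [dotProduct, mulVec, mul_sum]
    rw [hreal] at this
    exact_mod_cast this

/-- Operator monotonicity of `log` is available on C⋆-algebras, so it is transported to real
matrices through the complexification. -/
theorem cfc_log_le_cfc_log {A B : Matrix n n ℝ} (hA : A.PosDef) (hAB : A ≤ B) :
    cfc Real.log A ≤ cfc Real.log B := by
  have hB : B.PosDef := by simpa using hA.add_posSemidef hAB
  rw [← ofRealStarAlgHom_le_iff, ofRealStarAlgHom_cfc _ hA.isHermitian,
    ofRealStarAlgHom_cfc _ hB.isHermitian]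
  have hA' : IsStrictlyPositive (ofRealStarAlgHom A) :=
    IsStrictlyPositive.iff_of_unital.2
      ⟨by simpa using OrderHomClass.mono ofRealStarAlgHom (nonneg_iff_posSemidef.2 hA.posSemidef),
       hA.isUnit.map _⟩
  exact CFC.log_le_log (ofRealStarAlgHom_le_iff.2 hAB) hA'

end Complexification

theorem conjTranspose_mul_self_le_diagonal (B : Matrix m n ℝ) {g : n → ℝ} (hg : ∀ k, 0 < g k) :
    Bᴴ * B ≤ diagonal fun k => (∑ i, g i) * (Bᴴ * B) k k / g k := by
  rw [le_iff, posSemidef_iff_dotProduct_mulVec]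
  refine ⟨(isHermitian_diagonal _).sub (isHermitian_conjTranspose_mul_self B), fun x => ?_⟩
  have cauchy_schwarz (i : m) :
      (∑ k, B i k * x k) ^ 2 ≤ (∑ k, g k) * ∑ k, (B i k * x k) ^ 2 / g k :=
    sum_sq_le_sum_mul_sum_of_sq_le_mul _ (fun k _ => (hg k).le)
      (fun k _ => div_nonneg (sq_nonneg _) (hg k).le)
      (fun k _ => (mul_div_cancel₀ _ (hg k).ne').ge)
  have quad : star x ⬝ᵥ (Bᴴ * B) *ᵥ x = ∑ i, (∑ k, B i k * x k) ^ 2 := by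
    rw [← mulVec_mulVec, dotProduct_mulVec, vecMul_conjTranspose, star_trivial]
    simp [dotProduct, mulVec, sq]
  have diag : star x ⬝ᵥ (diagonal fun k => (∑ i, g i) * (Bᴴ * B) k k / g k) *ᵥ x
      = (∑ k, g k) * ∑ i, ∑ k, (B i k * x k) ^ 2 / g k := by
    simp only [star_trivial, mulVec_diagonal, dotProduct, mul_apply, conjTranspose_apply, mul_sum,
      sum_mul, sum_div]
    rw [sum_comm]
    refine sum_congr rfl fun k _ => sum_congr rfl fun i _ => ?_
    exact sum_congr rfl fun j _ => by ring
  rw [sub_mulVec, dotProduct_sub, sub_nonneg, quad, diag, mul_sum]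
  exact sum_le_sum fun i _ => cauchy_schwarz i

theorem cfc_log_add_conjTranspose_mul_self_le (B : Matrix m n ℝ) {g : n → ℝ}
    (hg : ∀ k, 0 < g k) {δ : ℝ} (hδ : 0 < δ) :
    cfc (fun t => Real.log (t + δ)) (Bᴴ * B) ≤
      diagonal fun k => Real.log ((∑ i, g i) * (Bᴴ * B) k k / g k + δ) := by
  have hA := posSemidef_conjTranspose_mul_self B
  have hδ' : (algebraMap ℝ (Matrix n n ℝ) δ).PosDef := by
    simpa [Algebra.algebraMap_eq_smul_one] using PosDef.one.smul hδ
  have hs := (Bᴴ * B).finite_spectrum (R := ℝ)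
  calc cfc (fun t => Real.log (t + δ)) (Bᴴ * B)
        = cfc Real.log (Bᴴ * B + algebraMap ℝ _ δ) := by
          rw [cfc_comp' Real.log (· + δ) _ ((hs.image _).continuousOn _) (hs.continuousOn _),
            cfc_add_const δ (fun x => x) _ (hs.continuousOn _),
            cfc_id' ℝ _ hA.isHermitian.isSelfAdjoint]
    _ ≤ cfc Real.log (diagonal fun k => (∑ i, g i) * (Bᴴ * B) k k / g k + δ) := by
          refine cfc_log_le_cfc_log (PosDef.posSemidef_add hA hδ') ?_
          rw [algebraMap_eq_diagonal, ← diagonal_add]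
          exact add_le_add (conjTranspose_mul_self_le_diagonal B hg) le_rfl
    _ = _ := cfc_diagonal _ _

end Matrix

theorem tendsto_mul_log_perturbed_div {a q f c : ℝ} (h : a ≠ 0 → 0 < q ∧ 0 < f) :
    Tendsto (fun δ => a * log ((1 + c * δ) * q / (f + δ) + δ)) (𝓝[>] 0)
      (𝓝 (a * (log q - log f))) := by
  rcases eq_or_ne a 0 with rfl | ha
  · simp
  obtain ⟨hq, hf⟩ := h ha
  apply tendsto_nhdsWithin_of_tendsto_nhds
  have hcont : ContinuousAt (fun δ => a * log ((1 + c * δ) * q / (f + δ) + δ)) 0 := by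
    fun_prop (disch := simp [hq.ne', hf.ne'])
  simpa [log_div hq.ne' hf.ne'] using hcont.tendsto

theorem shannon_sum_sub_sum_mul_shannon {X K : Type} [Fintype X] [Fintype K]
    (μ : X → ℝ) (F : K → X → ℝ) :
    shannon (fun k => ∑ x, μ x * F k x) - ∑ x, μ x * shannon (fun k => F k x) =
      -∑ x, ∑ k, μ x * F k x * (log (∑ y, μ y * F k y) - log (F k x)) := by
  simp only [shannon, eta, mul_sub, sum_sub_distrib, sum_mul, mul_sum, sum_neg_distrib, mul_neg,
    mul_assoc]
  rw [sum_comm (f := fun x k => μ x * (F k x * log (∑ y, μ y * F k y)))]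
  ring

theorem neg_vonNeumannR_conjTranspose_mul_self_le {X K : Type} [Fintype X] [Fintype K]
    [DecidableEq K] (B : Matrix X K ℝ) {g : X → K → ℝ} (hg : ∀ x k, 0 < g x k) {δ : ℝ}
    (hδ : 0 < δ) :
    -vonNeumannR (isHermitian_conjTranspose_mul_self B) ≤
      ∑ x, ∑ k, B x k ^ 2 * log ((∑ i, g x i) * (Bᴴ * B) k k / g x k + δ) := by
  have hA := posSemidef_conjTranspose_mul_self B
  have hH := isHermitian_conjTranspose_mul_self B
  calc -vonNeumannR hH = ∑ j, hH.eigenvalues j * log (hH.eigenvalues j) := by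
        simp [vonNeumannR, eta]
    _ ≤ ∑ j, hH.eigenvalues j * log (hH.eigenvalues j + δ) := by
        refine sum_le_sum fun j _ => ?_
        rcases (hA.eigenvalues_nonneg j).eq_or_lt with h | h
        · rw [← h]; simp
        · exact mul_le_mul_of_nonneg_left (log_le_log h (by linarith)) h.le
    _ = (Bᴴ * B * cfc (fun t => log (t + δ)) (Bᴴ * B)).trace :=
        (hH.trace_mul_cfc fun t => log (t + δ)).symm
    _ = ∑ x, B x ⬝ᵥ cfc (fun t => log (t + δ)) (Bᴴ * B) *ᵥ star (B x) :=
        trace_conjTranspose_mul_self_mul _ _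
    _ ≤ _ := sum_le_sum fun x _ => ?_
  have hle := cfc_log_add_conjTranspose_mul_self_le B (hg x) hδ
  have hquad := (le_iff.1 hle).dotProduct_mulVec_nonneg (B x)
  rw [sub_mulVec, dotProduct_sub, sub_nonneg] at hquad
  simp only [star_trivial] at hquad ⊢
  refine hquad.trans_eq ?_
  simp only [dotProduct, mulVec_diagonal]
  exact sum_congr rfl fun k _ => by ring

noncomputable def weightedAmplitudes {X K : Type} (μ : X → ℝ) (F : K → X → ℝ) : Matrix X K ℝ :=
  of fun x k => √(μ x * F k x)

lemma weightedAmplitudes_sq {X K : Type} {μ : X → ℝ} {F : K → X → ℝ} {x : X} {k : K}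
    (hμ : 0 ≤ μ x) (hF : 0 ≤ F k x) : weightedAmplitudes μ F x k ^ 2 = μ x * F k x :=
  sq_sqrt (mul_nonneg hμ hF)

lemma conjTranspose_weightedAmplitudes_mul_self_apply {X K : Type} [Fintype X] {μ : X → ℝ}
    {F : K → X → ℝ} (hμ : ∀ x, 0 ≤ μ x) (hF : ∀ k x, 0 ≤ F k x) (k l : K) :
    ((weightedAmplitudes μ F)ᴴ * weightedAmplitudes μ F) k l = ∑ x, μ x * √(F k x * F l x) := by
  simp only [mul_apply, conjTranspose_apply, star_trivial, weightedAmplitudes, of_apply]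
  refine sum_congr rfl fun x _ => ?_
  rw [← sqrt_mul (mul_nonneg (hμ x) (hF k x)), mul_mul_mul_comm, sqrt_mul (mul_self_nonneg _),
    sqrt_mul_self (hμ x)]

theorem stmt17_general {X K : Type} [Fintype X] [Fintype K] [DecidableEq K]
    (μ : X → ℝ) (hμ0 : ∀ x, 0 ≤ μ x)
    (F : K → X → ℝ) (hF0 : ∀ k x, 0 ≤ F k x) (hF1 : ∀ x, ∑ k, F k x = 1)
    (ρ : Matrix K K ℝ)
    (hρ : ∀ k l, ρ k l = ∑ x, μ x * Real.sqrt (F k x * F l x))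
    (hherm : ρ.IsHermitian) :
    shannon (fun k => ∑ x, μ x * F k x) -
        (∑ x, μ x * shannon (fun k => F k x)) ≤
      vonNeumannR hherm := by
  set q := fun k => ∑ x, μ x * F k x
  set B := weightedAmplitudes μ F
  have hgram := conjTranspose_weightedAmplitudes_mul_self_apply hμ0 hF0
  obtain rfl : ρ = Bᴴ * B := ext fun k l => (hρ k l).trans (hgram k l).symm
  have hbound : ∀ δ > 0, -vonNeumannR hherm ≤
      ∑ x, ∑ k, μ x * F k x * log ((1 + Fintype.card K * δ) * q k / (F k x + δ) + δ) := by
    intro δ hδ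
    have hg (x : X) (k : K) : 0 < F k x + δ := by linarith [hF0 k x]
    convert neg_vonNeumannR_conjTranspose_mul_self_le B hg hδ using 5 with x _ k _
    · exact (weightedAmplitudes_sq (hμ0 x) (hF0 k x)).symm
    · rw [sum_add_distrib, hF1, sum_const, card_univ, nsmul_eq_mul, hgram]
      simp_rw [sqrt_mul_self (hF0 k _), q]
  have hsupp (x : X) (k : K) (h : μ x * F k x ≠ 0) : 0 < q k ∧ 0 < F k x :=
    ⟨((mul_nonneg (hμ0 x) (hF0 k x)).lt_of_ne' h).trans_le
      (single_le_sum (fun y _ => mul_nonneg (hμ0 y) (hF0 k y)) (mem_univ x)),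
     (hF0 k x).lt_of_ne' (right_ne_zero_of_mul h)⟩
  have hlim := tendsto_finsetSum univ fun x _ => tendsto_finsetSum univ fun k _ =>
    tendsto_mul_log_perturbed_div (c := Fintype.card K) (hsupp x k)
  rw [shannon_sum_sub_sum_mul_shannon, neg_le]
  exact ge_of_tendsto hlim (eventually_nhdsWithin_of_forall hbound)

/-- `H_Hud[μ,F] ≤ S_q(ρ_Mak[μ,F])`. -/
theorem stmt17 {X K : Type} [Fintype X] [Fintype K] [DecidableEq K]
    (μ : X → ℝ) (hμ0 : ∀ x, 0 ≤ μ x) (hμ1 : ∑ x, μ x = 1)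
    (F : K → X → ℝ) (hF0 : ∀ k x, 0 ≤ F k x) (hF1 : ∀ x, ∑ k, F k x = 1)
    (ρ : Matrix K K ℝ)
    (hρ : ∀ k l, ρ k l = ∑ x, μ x * Real.sqrt (F k x * F l x))
    (hherm : ρ.IsHermitian) :
    shannon (fun k => ∑ x, μ x * F k x) -
        (∑ x, μ x * shannon (fun k => F k x)) ≤
      vonNeumannR hherm :=
  stmt17_general μ hμ0 F hF0 hF1 ρ hρ hherm
end

section
/- Let Θ be induced by a stochastic matrix P on a finite set X with invariant measure μ, and let F = {f_k} be a partition of unity with f_k = Σ_i f_{ik} χ_{C_i} for a partition C = {C_i} and stochastic matrix [f_{ik}]. Then the AFL density matrix ρ^{(2)} with entries ρ_{(k₀,k₁),(l₀,l₁)} = μ(√(f_{k₀}f_{l₀}) · Θ(√(f_{k₁}f_{l₁}))) is a convex combination Σ_{i₀,i₁} μ(χ_{C_{i₀}} Θ(χ_{C_{i₁}})) |v^{(i₀,i₁)}⟩⟨v^{(i₀,i₁)}| of pure states with unit vectors v^{(i₀,i₁)}_{(k₀,k₁)} = √(f_{i₀k₀} f_{i₁k₁}), and consequently S_q(ρ^{(2)})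 ≤ S(μ∘(χ_C ∨ Θ(χ_C))), the Shannon entropy of the refined sharp partition. -/
/-!
Every `f_k` is constant on the cells of `C`, so grouping the double sum that defines `ρ` by the
pair of cells `(c x, c y)` writes `ρ = ∑ w_{ii} v_{ii} v_{ii}ᵀ`, with unit vectors `v_{ii}` and
weights `w_{ii}` the joint probabilities of the refined partition.

For such a mixture `ρ = AᵀA` with `A = diag(√w) V`; if `U` diagonalizes `ρ`, the columns of
`a = AU` are orthogonal with squared norms the eigenvalues `λ_j`. The matrix `a_{ij}² / λ_j` has
unit column sums, row sums at most one (Bessel) and maps `λ` to `w`, so Jensen's inequality for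
the concave `η` with `η 0 = 0` gives `∑ η(λ_j) ≤ ∑ η(w_i)`.
-/

open Finset Matrix Set

theorem ConcaveOn.sum_mul_le_map_sum_mul_of_sum_le_one {ι : Type*} [Fintype ι] {f : ℝ → ℝ}
    (hf : ConcaveOn ℝ (Ici 0) f) (hf0 : 0 ≤ f 0) {p x : ι → ℝ} (hp0 : ∀ i, 0 ≤ p i)
    (hp1 : ∑ i, p i ≤ 1) (hx : ∀ i, 0 ≤ x i) :
    ∑ i, p i * f (x i) ≤ f (∑ i, p i * x i) := by
  have h := hf.map_add_sum_le (t := univ) (v := 1 - ∑ i, p i) (q := 0) (fun i _ => hp0 i)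
    (by ring) (fun i _ => hx i) (sub_nonneg.mpr hp1) (mem_Ici.2 le_rfl)
  simp only [smul_eq_mul, mul_zero, zero_add] at h
  nlinarith [mul_nonneg (sub_nonneg.mpr hp1) hf0]

theorem sum_map_le_sum_map_sum_mul_of_substochastic {ι κ : Type*} [Fintype ι] [Fintype κ]
    {f : ℝ → ℝ} (hf : ConcaveOn ℝ (Ici 0) f) (hf0 : f 0 = 0) {D : ι → κ → ℝ} {lam : κ → ℝ}
    (hD : ∀ i j, 0 ≤ D i j) (hrow : ∀ i, ∑ j, D i j ≤ 1)
    (hcol : ∀ j, lam j ≠ 0 → ∑ i, D i j = 1) (hlam : ∀ j, 0 ≤ lam j) :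
    ∑ j, f (lam j) ≤ ∑ i, f (∑ j, D i j * lam j) :=
  calc ∑ j, f (lam j) = ∑ j, (∑ i, D i j) * f (lam j) := by
        refine sum_congr rfl fun j _ => ?_
        rcases eq_or_ne (lam j) 0 with h | h
        · simp [h, hf0]
        · rw [hcol j h, one_mul]
    _ = ∑ i, ∑ j, D i j * f (lam j) := by simp only [sum_mul]; exact sum_comm
    _ ≤ ∑ i, f (∑ j, D i j * lam j) := sum_le_sum fun i _ =>
        hf.sum_mul_le_map_sum_mul_of_sum_le_one hf0.ge (hD i) (hrow i) hlam

section OrthogonalColumns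

variable {ι κ : Type*} [Fintype ι] [Fintype κ] [DecidableEq κ] {a : Matrix ι κ ℝ} {lam : κ → ℝ}

omit [Fintype κ] in
theorem sum_sq_eq_of_transpose_mul_self_eq_diagonal (h : aᵀ * a = diagonal lam) (j : κ) :
    ∑ i, a i j ^ 2 = lam j := by
  simpa [mul_apply, sq] using congrFun (congrFun h j) j

/-- Bessel's inequality for the orthonormal columns `a_{·j} / √λ_j`; a column with `lam j = 0`
vanishes, matching the junk value `x / 0 = 0`. -/
theorem sum_sq_div_le_one_of_transpose_mul_self_eq_diagonal (h : aᵀ * a = diagonal lam)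
    (i : ι) : ∑ j, a i j ^ 2 / lam j ≤ 1 := by
  set s := ∑ j, a i j ^ 2 / lam j
  set z : κ → ℝ := fun j => a i j / lam j
  have hs : (a *ᵥ z) i = s := by
    simp only [mulVec, dotProduct, z, s]
    exact sum_congr rfl fun j _ => by ring
  have hnorm : (a *ᵥ z) ⬝ᵥ (a *ᵥ z) = s := by
    rw [dotProduct_mulVec, ← mulVec_transpose, mulVec_mulVec, h, dotProduct_comm]
    refine sum_congr rfl fun j _ => ?_
    rcases eq_or_ne (lam j) 0 with hj | hj
    · simp [z, hj]
    · simp only [mulVec_diagonal, z]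
      field_simp
  have hle : s ^ 2 ≤ s := by
    calc s ^ 2 = (a *ᵥ z) i * (a *ᵥ z) i := by rw [hs, sq]
      _ ≤ (a *ᵥ z) ⬝ᵥ (a *ᵥ z) := single_le_sum (f := fun i' => (a *ᵥ z) i' * (a *ᵥ z) i')
          (fun i' _ => mul_self_nonneg _) (mem_univ i)
      _ = s := hnorm
  nlinarith

theorem sum_map_le_sum_map_diag_of_transpose_mul_self_eq_diagonal {f : ℝ → ℝ}
    (hf : ConcaveOn ℝ (Ici 0) f) (hf0 : f 0 = 0) (h : aᵀ * a = diagonal lam) :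
    ∑ j, f (lam j) ≤ ∑ i, f ((a * aᵀ) i i) := by
  have hcol := sum_sq_eq_of_transpose_mul_self_eq_diagonal h
  have hlam : ∀ j, 0 ≤ lam j := fun j => hcol j ▸ sum_nonneg fun i _ => sq_nonneg _
  have hdiag : ∀ i, ∑ j, a i j ^ 2 / lam j * lam j = (a * aᵀ) i i := fun i => by
    simp only [mul_apply, transpose_apply, ← sq]
    refine sum_congr rfl fun j _ => ?_
    rcases eq_or_ne (lam j) 0 with hj | hj
    · have hzero := (sum_eq_zero_iff_of_nonneg fun i _ => sq_nonneg (a i j)).1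
        ((hcol j).trans hj) i (mem_univ i)
      simp [hj, hzero]
    · exact div_mul_cancel₀ _ hj
  simpa only [hdiag] using sum_map_le_sum_map_sum_mul_of_substochastic hf hf0
    (fun i j => div_nonneg (sq_nonneg (a i j)) (hlam j))
    (sum_sq_div_le_one_of_transpose_mul_self_eq_diagonal h)
    (fun j hj => by rw [← sum_div, hcol j, div_self hj]) hlam

end OrthogonalColumns

theorem Matrix.IsHermitian.sum_map_eigenvalues_le_of_eq_transpose_mul_self
    {ι K : Type*} [Fintype ι] [Fintype K] [DecidableEq K] {f : ℝ → ℝ}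
    (hf : ConcaveOn ℝ (Ici 0) f) (hf0 : f 0 = 0) {ρ : Matrix K K ℝ} (hρ : ρ.IsHermitian)
    {A : Matrix ι K ℝ} (hA : ρ = Aᵀ * A) :
    ∑ j, f (hρ.eigenvalues j) ≤ ∑ i, f ((A * Aᵀ) i i) := by
  set U : Matrix K K ℝ := (hρ.eigenvectorUnitary : Matrix K K ℝ)
  have hU : U * Uᵀ = 1 := by
    simpa [star_eq_conjTranspose] using Unitary.mul_star_self_of_mem hρ.eigenvectorUnitary.2
  have hdiag : Uᵀ * ρ * U = diagonal hρ.eigenvalues := by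
    simpa [star_eq_conjTranspose] using hρ.conjStarAlgAut_star_eigenvectorUnitary
  have := sum_map_le_sum_map_diag_of_transpose_mul_self_eq_diagonal (a := A * U) hf hf0
    (by rw [transpose_mul, ← hdiag, hA]; simp only [Matrix.mul_assoc])
  rwa [transpose_mul, Matrix.mul_assoc, ← Matrix.mul_assoc U, hU, Matrix.one_mul] at this

theorem Matrix.IsHermitian.sum_map_eigenvalues_le_of_eq_sum_smul_vecMulVec
    {ι K : Type*} [Fintype ι] [Fintype K] [DecidableEq K] {f : ℝ → ℝ}
    (hf : ConcaveOn ℝ (Ici 0) f) (hf0 : f 0 = 0) {ρ : Matrix K K ℝ} (hρ : ρ.IsHermitian)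
    {w : ι → ℝ} (hw : ∀ i, 0 ≤ w i) {v : ι → K → ℝ} (hv : ∀ i, v i ⬝ᵥ v i = 1)
    (hρv : ρ = ∑ i, w i • vecMulVec (v i) (v i)) :
    ∑ j, f (hρ.eigenvalues j) ≤ ∑ i, f (w i) := by
  set A : Matrix ι K ℝ := of fun i k => √(w i) * v i k
  have hA : ρ = Aᵀ * A := by
    ext k l
    simp only [hρv, sum_apply, smul_apply, vecMulVec_apply, smul_eq_mul, mul_apply,
      transpose_apply, A, of_apply]
    refine sum_congr rfl fun i _ => ?_
    rw [mul_mul_mul_comm, Real.mul_self_sqrt (hw i)]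
  have hAA : ∀ i, (A * Aᵀ) i i = w i := fun i => by
    change (√(w i) • v i) ⬝ᵥ (√(w i) • v i) = w i
    rw [smul_dotProduct, dotProduct_smul, hv i, smul_eq_mul, smul_eq_mul, mul_one,
      Real.mul_self_sqrt (hw i)]
  simpa only [hAA] using hρ.sum_map_eigenvalues_le_of_eq_transpose_mul_self hf hf0 hA

theorem sum_mul_sum_mul_comp_eq_sum_fiber_mul {X I : Type*} [Fintype X] [Fintype I]
    [DecidableEq I] (μ : X → ℝ) (P : X → X → ℝ) (c : X → I) (φ : I × I → ℝ) :
    ∑ x, μ x * ∑ y, P x y * φ (c x, c y) =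
      ∑ ii : I × I, (∑ x, μ x * ((if c x = ii.1 then 1 else 0) *
        ∑ y, P x y * if c y = ii.2 then 1 else 0)) * φ ii := by
  simp only [sum_mul, mul_sum]
  rw [eq_comm, sum_comm]
  refine sum_congr rfl fun x _ => ?_
  rw [eq_comm, sum_comm]
  refine sum_congr rfl fun y _ => ?_
  simp [Fintype.sum_prod_type, ite_mul, mul_ite, mul_assoc]

theorem concaveOn_eta : ConcaveOn ℝ (Ici 0) eta := by
  convert Real.concaveOn_negMulLog using 1
  funext x
  simp [eta, Real.negMulLog]

theorem stmt18_general {X I K : Type} [Fintype X] [Fintype I] [DecidableEq I] [Fintype K]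
    [DecidableEq K]
    (μ : X → ℝ) (hμ0 : ∀ x, 0 ≤ μ x)
    (P : X → X → ℝ) (hP0 : ∀ x y, 0 ≤ P x y)
    (Θ : (X → ℝ) → (X → ℝ)) (hΘ : ∀ f x, Θ f x = ∑ y, P x y * f y)
    (c : X → I)
    (M : I → K → ℝ) (hM0 : ∀ i k, 0 ≤ M i k) (hM1 : ∀ i, ∑ k, M i k = 1)
    (F : K → X → ℝ) (hF : ∀ k x, F k x = M (c x) k)
    (ρ : Matrix (K × K) (K × K) ℝ)
    (hρ : ∀ kk ll : K × K, ρ kk ll = ∑ x, μ x *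
      (Real.sqrt (F kk.1 x * F ll.1 x) *
        Θ (fun y => Real.sqrt (F kk.2 y * F ll.2 y)) x))
    (hherm : ρ.IsHermitian) :
    ρ = ∑ ii : I × I,
        (∑ x, μ x * ((if c x = ii.1 then (1:ℝ) else 0) *
            Θ (fun y => if c y = ii.2 then (1:ℝ) else 0) x)) •
          Matrix.vecMulVec
            (fun kk : K × K => Real.sqrt (M ii.1 kk.1 * M ii.2 kk.2))
            (fun kk : K × K => Real.sqrt (M ii.1 kk.1 * M ii.2 kk.2)) ∧
    vonNeumannR hherm ≤
      shannon (fun ii : I × I => ∑ x, μ x *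
        ((if c x = ii.1 then (1:ℝ) else 0) *
          Θ (fun y => if c y = ii.2 then (1:ℝ) else 0) x)) := by
  set w : I × I → ℝ := fun ii => ∑ x, μ x * ((if c x = ii.1 then (1:ℝ) else 0) *
    Θ (fun y => if c y = ii.2 then (1:ℝ) else 0) x)
  set v : I × I → K × K → ℝ := fun ii kk => √(M ii.1 kk.1 * M ii.2 kk.2)
  have hsqrt : ∀ i i' k k', √(M i k * M i' k') = √(M i k) * √(M i' k') :=
    fun i i' k k' => Real.sqrt_mul (hM0 i k) _
  have hw : ∀ ii, 0 ≤ w ii := fun ii => sum_nonneg fun x _ => by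
    rw [hΘ]
    refine mul_nonneg (hμ0 x) (mul_nonneg (by positivity) (sum_nonneg fun y _ => ?_))
    exact mul_nonneg (hP0 x y) (by positivity)
  have hv : ∀ ii, v ii ⬝ᵥ v ii = 1 := fun ii => by
    simp only [dotProduct, v, fun kk : K × K => Real.mul_self_sqrt
      (mul_nonneg (hM0 ii.1 kk.1) (hM0 ii.2 kk.2))]
    rw [Fintype.sum_prod_type, ← sum_mul_sum, hM1, hM1, one_mul]
  have hdecomp : ρ = ∑ ii, w ii • vecMulVec (v ii) (v ii) := by
    ext kk ll
    simp only [Matrix.sum_apply, Matrix.smul_apply, vecMulVec_apply, smul_eq_mul, w, hΘ,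
      ← sum_mul_sum_mul_comp_eq_sum_fiber_mul μ P c (fun ii => v ii kk * v ii ll), hρ, hF]
    refine sum_congr rfl fun x _ => ?_
    rw [mul_sum]
    refine congrArg _ (sum_congr rfl fun y _ => ?_)
    simp only [v, hsqrt]
    ring
  exact ⟨hdecomp,
    hherm.sum_map_eigenvalues_le_of_eq_sum_smul_vecMulVec concaveOn_eta (by simp [eta]) hw hv
      hdecomp⟩

/-- for `Θ` induced by a stochastic matrix P with invariant
measure μ, and F a partition of unity which is simple over a partition C
(cell map `c : X → I`, `f_k(x) = M_{c(x),k}` with M stochastic), the AFL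
density matrix at time 2,
`ρ_{(k₀,k₁),(l₀,l₁)} = μ(√(f_{k₀}f_{l₀}) · Θ(√(f_{k₁}f_{l₁})))`,
is the convex combination `Σ_{i₀,i₁} μ(χ_{C_{i₀}}Θ(χ_{C_{i₁}})) |v⟩⟨v|` of the
pure states given by the unit vectors `v_{(k₀,k₁)} = √(M_{i₀k₀} M_{i₁k₁})`,
and consequently `S_q(ρ) ≤ S(μ∘(χ_C ∨ Θ(χ_C)))`. -/
theorem stmt18 {X I K : Type} [Fintype X] [Fintype I] [DecidableEq I] [Fintype K]
    [DecidableEq K]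
    (μ : X → ℝ) (hμ0 : ∀ x, 0 ≤ μ x) (hμ1 : ∑ x, μ x = 1)
    (P : X → X → ℝ) (hP0 : ∀ x y, 0 ≤ P x y) (hP1 : ∀ x, ∑ y, P x y = 1)
    (hinv : ∀ y, ∑ x, μ x * P x y = μ y)
    (Θ : (X → ℝ) → (X → ℝ)) (hΘ : ∀ f x, Θ f x = ∑ y, P x y * f y)
    (c : X → I) (hc : Function.Surjective c)
    (M : I → K → ℝ) (hM0 : ∀ i k, 0 ≤ M i k) (hM1 : ∀ i, ∑ k, M i k = 1)
    (F : K → X → ℝ) (hF : ∀ k x, F k x = M (c x) k)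
    (ρ : Matrix (K × K) (K × K) ℝ)
    (hρ : ∀ kk ll : K × K, ρ kk ll = ∑ x, μ x *
      (Real.sqrt (F kk.1 x * F ll.1 x) *
        Θ (fun y => Real.sqrt (F kk.2 y * F ll.2 y)) x))
    (hherm : ρ.IsHermitian) :
    ρ = ∑ ii : I × I,
        (∑ x, μ x * ((if c x = ii.1 then (1:ℝ) else 0) *
            Θ (fun y => if c y = ii.2 then (1:ℝ) else 0) x)) •
          Matrix.vecMulVec
            (fun kk : K × K => Real.sqrt (M ii.1 kk.1 * M ii.2 kk.2))
            (fun kk : K × K => Real.sqrt (M ii.1 kk.1 * M ii.2 kk.2)) ∧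
    vonNeumannR hherm ≤
      shannon (fun ii : I × I => ∑ x, μ x *
        ((if c x = ii.1 then (1:ℝ) else 0) *
          Θ (fun y => if c y = ii.2 then (1:ℝ) else 0) x)) :=
  stmt18_general μ hμ0 P hP0 Θ hΘ c M hM0 hM1 F hF ρ hρ hherm
end
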